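/- Let n, m, l, j be natural numbers with n ≥ 2, m ≥ 1, l ≥ 1 and j ≥ 1. Then I_{n,m,l,j} = −(n−1)·I_{n−2,m,l,j} + m·I_{n−1,m−1,l,j} + l·I_{n−1,m,l−1,j} + j·I_{n−1,m,l,j−1}. -/

import Mathlib

open MeasureTheory Real

/-- Physicists' Hermite polynomials: `H 0 x = 1`, `H 1 x = 2x`,
`H (n+1) x = 2x * H n x - 2n * H (n-1) x`. -/
noncomputable def hermiteP : ℕ → ℝ → ℝ
  | 0, _ => 1
  | 1, x => 2 * x
  | n + 2, x => 2 * x * hermiteP (n + 1) x - 2 * ((n : ℝ) + 1) * hermiteP n x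

/-- `I n m l k = √(2/π) ∫ H_n(x) H_m(x) H_l(x) H_k(x) e^{-2x²} dx`. -/
noncomputable def I (n m l k : ℕ) : ℝ :=
  Real.sqrt (2 / π) *
    ∫ x : ℝ,
      hermiteP n x * hermiteP m x * hermiteP l x * hermiteP k x * Real.exp (-2 * x ^ 2)

/-!
Write `I` as `√(2/π) · L (H_n H_m H_l H_j)` with `L p = ∫ p(x) e^{-2x²} dx`, and split off
`H_n = 2X H_{n-1} - 2(n-1) H_{n-2}`. Integration by parts against the weight gives
`L (X p) = L (p') / 4`, so with `H_k' = 2k H_{k-1}` and the Leibniz rule the term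
`2 L (X H_{n-1} H_m H_l H_j)` contributes `(n-1) I_{n-2,m,l,j} + m I_{n-1,m-1,l,j} +
l I_{n-1,m,l-1,j} + j I_{n-1,m,l,j-1}`; its first summand cancels half of `-2(n-1) I_{n-2,m,l,j}`.
-/

open Polynomial

noncomputable def hermitePoly : ℕ → ℝ[X]
  | 0 => 1
  | 1 => C 2 * X
  | n + 2 => C 2 * X * hermitePoly (n + 1) - C (2 * ((n : ℝ) + 1)) * hermitePoly n

local notation "𝓗" => hermitePoly

theorem eval_hermitePoly : ∀ (n : ℕ) (x : ℝ), (𝓗 n).eval x = hermiteP n x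
  | 0, x => by simp [hermitePoly, hermiteP]
  | 1, x => by simp [hermitePoly, hermiteP]
  | n + 2, x => by
    simp [hermitePoly, hermiteP, eval_hermitePoly n, eval_hermitePoly (n + 1)]

theorem derivative_hermitePoly :
    ∀ n : ℕ, derivative (𝓗 (n + 1)) = C (2 * ((n : ℝ) + 1)) * 𝓗 n
  | 0 => by simp [hermitePoly]
  | 1 => by
    simp only [hermitePoly, derivative_mul, derivative_sub, derivative_C, derivative_X,
      derivative_one]
    simp only [map_mul, map_add, map_ofNat, map_natCast, map_one]
    ring
  | n + 2 => by
    rw [hermitePoly, derivative_sub, derivative_mul, derivative_mul, derivative_hermitePoly (n + 1),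
      derivative_C_mul, derivative_hermitePoly n, hermitePoly]
    simp only [derivative_C, derivative_X]
    simp only [map_mul, map_add, map_ofNat, map_natCast, map_one]
    push_cast
    ring

theorem integrable_eval_mul_exp_neg_mul_sq {b : ℝ} (hb : 0 < b) (p : ℝ[X]) :
    Integrable fun x : ℝ => p.eval x * exp (-b * x ^ 2) := by
  induction p using Polynomial.induction_on' with
  | add p q hp hq => simpa [add_mul, Pi.add_def] using hp.add hq
  | monomial n a =>
    have h := (integrable_rpow_mul_exp_neg_mul_sq hb
      (by linarith [n.cast_nonneg (α := ℝ)] : (-1 : ℝ) < n)).const_mul a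
    simpa [mul_assoc] using h

noncomputable def gaussIntegral {b : ℝ} (hb : 0 < b) : ℝ[X] →ₗ[ℝ] ℝ where
  toFun p := ∫ x, p.eval x * exp (-b * x ^ 2)
  map_add' p q := by
    simp only [eval_add, add_mul]
    exact integral_add (integrable_eval_mul_exp_neg_mul_sq hb p)
      (integrable_eval_mul_exp_neg_mul_sq hb q)
  map_smul' r p := by simp [mul_assoc, integral_const_mul]

theorem gaussIntegral_apply {b : ℝ} (hb : 0 < b) (p : ℝ[X]) :
    gaussIntegral hb p = ∫ x, p.eval x * exp (-b * x ^ 2) := rfl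

theorem gaussIntegral_derivative_sub {b : ℝ} (hb : 0 < b) (p : ℝ[X]) :
    gaussIntegral hb (derivative p - C (2 * b) * (X * p)) = 0 := by
  have hderiv : ∀ x : ℝ, HasDerivAt (fun y => p.eval y * exp (-b * y ^ 2))
      ((derivative p - C (2 * b) * (X * p)).eval x * exp (-b * x ^ 2)) x := by
    intro x
    have hexp := ((hasDerivAt_pow 2 x).const_mul (-b)).exp
    refine ((p.hasDerivAt x).mul hexp).congr_deriv ?_
    simp only [eval_sub, eval_mul, eval_C, eval_X]
    ring
  exact integral_eq_zero_of_hasDerivAt_of_integrable hderiv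
    (integrable_eval_mul_exp_neg_mul_sq hb _) (integrable_eval_mul_exp_neg_mul_sq hb p)

theorem gaussIntegral_X_mul {b : ℝ} (hb : 0 < b) (p : ℝ[X]) :
    gaussIntegral hb (X * p) = (2 * b)⁻¹ * gaussIntegral hb (derivative p) := by
  have h := gaussIntegral_derivative_sub hb p
  rw [map_sub, C_mul', map_smul, smul_eq_mul, sub_eq_zero] at h
  field_simp
  linarith

theorem I_eq_gaussIntegral (n m l k : ℕ) :
    I n m l k = √(2 / π) * gaussIntegral two_pos (𝓗 n * 𝓗 m * 𝓗 l * 𝓗 k) := by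
  simp [I, gaussIntegral_apply, eval_hermitePoly]

theorem gaussIntegral_hermitePoly_add_two_mul (a b c d : ℕ) :
    gaussIntegral two_pos (𝓗 (a + 2) * 𝓗 (b + 1) * 𝓗 (c + 1) * 𝓗 (d + 1)) =
      -((a : ℝ) + 1) * gaussIntegral two_pos (𝓗 a * 𝓗 (b + 1) * 𝓗 (c + 1) * 𝓗 (d + 1)) +
        ((b : ℝ) + 1) * gaussIntegral two_pos (𝓗 (a + 1) * 𝓗 b * 𝓗 (c + 1) * 𝓗 (d + 1)) +
        ((c : ℝ) + 1) * gaussIntegral two_pos (𝓗 (a + 1) * 𝓗 (b + 1) * 𝓗 c * 𝓗 (d + 1)) +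
        ((d : ℝ) + 1) * gaussIntegral two_pos (𝓗 (a + 1) * 𝓗 (b + 1) * 𝓗 (c + 1) * 𝓗 d) := by
  set F := 𝓗 (a + 1) * 𝓗 (b + 1) * 𝓗 (c + 1) * 𝓗 (d + 1)
  have hsplit : 𝓗 (a + 2) * 𝓗 (b + 1) * 𝓗 (c + 1) * 𝓗 (d + 1) =
      C 2 * (X * F) - C (2 * ((a : ℝ) + 1)) * (𝓗 a * 𝓗 (b + 1) * 𝓗 (c + 1) * 𝓗 (d + 1)) := by
    rw [hermitePoly]
    ring
  have hleibniz : derivative F =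
      C (2 * ((a : ℝ) + 1)) * (𝓗 a * 𝓗 (b + 1) * 𝓗 (c + 1) * 𝓗 (d + 1)) +
      C (2 * ((b : ℝ) + 1)) * (𝓗 (a + 1) * 𝓗 b * 𝓗 (c + 1) * 𝓗 (d + 1)) +
      C (2 * ((c : ℝ) + 1)) * (𝓗 (a + 1) * 𝓗 (b + 1) * 𝓗 c * 𝓗 (d + 1)) +
      C (2 * ((d : ℝ) + 1)) * (𝓗 (a + 1) * 𝓗 (b + 1) * 𝓗 (c + 1) * 𝓗 d) := by
    simp only [F, derivative_mul, derivative_hermitePoly]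
    ring
  rw [hsplit, map_sub, C_mul', C_mul', map_smul, map_smul, gaussIntegral_X_mul, hleibniz]
  simp only [map_add, C_mul', map_smul, smul_eq_mul]
  ring

theorem I4_recurrence (n m l j : ℕ) (hn : 2 ≤ n) (hm : 1 ≤ m) (hl : 1 ≤ l) (hj : 1 ≤ j) :
    I n m l j =
      -((n : ℝ) - 1) * I (n - 2) m l j + (m : ℝ) * I (n - 1) (m - 1) l j +
        (l : ℝ) * I (n - 1) m (l - 1) j + (j : ℝ) * I (n - 1) m l (j - 1) := by
  obtain ⟨a, rfl⟩ : ∃ a, n = a + 2 := ⟨n - 2, by omega⟩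
  obtain ⟨b, rfl⟩ : ∃ b, m = b + 1 := ⟨m - 1, by omega⟩
  obtain ⟨c, rfl⟩ : ∃ c, l = c + 1 := ⟨l - 1, by omega⟩
  obtain ⟨d, rfl⟩ : ∃ d, j = d + 1 := ⟨j - 1, by omega⟩
  simp only [I_eq_gaussIntegral, gaussIntegral_hermitePoly_add_two_mul, Nat.add_sub_cancel,
    show a + 2 - 1 = a + 1 from rfl]
  push_cast
  ring
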